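/- Under the RU-QLP setup, for every i = 1,…,k, the sine of the angle between the i-th right singular vector v_i of A and the column space of P satisfies ‖(I − PP^T)v_i‖_2 ≤ δ_i^{2q+1} ‖Φ̂2 Φ̂1^†‖_2 / √(1 + γ^{4q+2} ‖Φ̂2 Φ̂1^†‖_2²). -/

import Mathlib

/-!
With `x = Φ̂₁^† eᵢ` we have `Φ̂₁ x = eᵢ`, and `y = (AᵀA)^q Aᵀ Φ x` lies in the column space of
`P̄`, which is that of `P = P̄ P̃`. In the basis `V`, `y` has coordinates `σⱼ^(2q+1) (UᵀΦx)ⱼ`: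
on the first `k` coordinates this is `σᵢ^(2q+1) eᵢ`, on the others it is `Σ_⊥^(2q+1) Φ̂₂ Φ̂₁^† eᵢ`,
of squared norm `T ≤ (σ_{k+1}^(2q+1) ‖Φ̂₂ Φ̂₁^†‖)²`. Projecting `vᵢ` onto the line through `y`
leaves a residual of squared norm `T / (σᵢ^(4q+2) + T)`, which is increasing in `T`; together with
`γ σᵢ ≤ σ_{k+1}` this gives the bound.
-/

open Matrix MeasureTheory ProbabilityTheory

noncomputable section

/-- Euclidean norm of a vector. -/
noncomputable def vecNorm {a : ℕ} (v : Fin a → ℝ) : ℝ :=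
  Real.sqrt (∑ i, v i ^ 2)

/-- Frobenius norm of a matrix. -/
noncomputable def frobNorm {a b : ℕ} (M : Matrix (Fin a) (Fin b) ℝ) : ℝ :=
  Real.sqrt (∑ i, ∑ j, M i j ^ 2)

/-- Spectral norm (ℓ² operator norm) of a matrix. -/
noncomputable def specNorm {a b : ℕ} (M : Matrix (Fin a) (Fin b) ℝ) : ℝ :=
  ‖LinearMap.toContinuousLinearMap (Matrix.toEuclideanLin M)‖

/-- `mNorm true` is the spectral norm, `mNorm false` is the Frobenius norm. -/
noncomputable def mNorm (t : Bool) {a b : ℕ} (M : Matrix (Fin a) (Fin b) ℝ) : ℝ :=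
  if t then specNorm M else frobNorm M

/-- The `i`-th largest singular value of a matrix (0-indexed, so `sval M 0` is the
largest singular value): the square root of the `i`-th largest eigenvalue of `MᵀM`. -/
noncomputable def sval {a b : ℕ} (M : Matrix (Fin a) (Fin b) ℝ) (i : Fin b) : ℝ :=
  Real.sqrt ((show (Mᵀ * M).IsHermitian by simpa using Matrix.isHermitian_conjTranspose_mul_self M).eigenvalues
    (Tuple.sort (show (Mᵀ * M).IsHermitian by simpa using Matrix.isHermitian_conjTranspose_mul_self M).eigenvalues i.rev))

/-- The Moore–Penrose pseudoinverse of a full-row-rank matrix. -/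
noncomputable def rowPinv {a b : ℕ} (M : Matrix (Fin a) (Fin b) ℝ) : Matrix (Fin b) (Fin a) ℝ :=
  Mᵀ * (M * Mᵀ)⁻¹

/-- The constant ω = ω₁ω₂, ω₁ = √(m−k) + √(k+p) + 7, ω₂ = 4e√(k+p)/(p+1). -/
noncomputable def omegaConst (m k p : ℕ) : ℝ :=
  (Real.sqrt ((m : ℝ) - (k : ℝ)) + Real.sqrt ((k : ℝ) + (p : ℝ)) + 7) *
    (4 * Real.exp 1 * Real.sqrt ((k : ℝ) + (p : ℝ)) / ((p : ℝ) + 1))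

/-- The constant C = √(k/(p−1)) + e√((m−k)(p+k))/p. -/
noncomputable def CConst (m k p : ℕ) : ℝ :=
  Real.sqrt ((k : ℝ) / ((p : ℝ) - 1)) +
    Real.exp 1 * Real.sqrt (((m : ℝ) - (k : ℝ)) * ((p : ℝ) + (k : ℝ))) / (p : ℝ)

section Euclidean

variable {a b : ℕ}

lemma vecNorm_eq_sqrt_dotProduct (v : Fin a → ℝ) : vecNorm v = Real.sqrt (v ⬝ᵥ v) := by
  simp only [vecNorm, dotProduct, sq]

lemma vecNorm_sq (v : Fin a → ℝ) : vecNorm v ^ 2 = v ⬝ᵥ v := by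
  rw [vecNorm, Real.sq_sqrt (Finset.sum_nonneg fun j _ => sq_nonneg (v j))]
  simp only [dotProduct, sq]

lemma vecNorm_single_one (i : Fin a) : vecNorm (Pi.single i (1 : ℝ)) = 1 := by
  simp [vecNorm_eq_sqrt_dotProduct]

lemma vecNorm_mulVec_le (M : Matrix (Fin a) (Fin b) ℝ) (x : Fin b → ℝ) :
    vecNorm (M *ᵥ x) ≤ specNorm M * vecNorm x := by
  have hnorm : ∀ {c : ℕ} (z : Fin c → ℝ), ‖WithLp.toLp 2 z‖ = vecNorm z := fun z => by
    simp [EuclideanSpace.norm_eq, vecNorm]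
  simpa [specNorm, hnorm] using
    (LinearMap.toContinuousLinearMap (Matrix.toEuclideanLin M)).le_opNorm (WithLp.toLp 2 x)

lemma sum_sq_mul_le_sq_mul_vecNorm {c : Fin a → ℝ} {B : ℝ} (hc : ∀ j, |c j| ≤ B)
    (u : Fin a → ℝ) : ∑ j, (c j * u j) ^ 2 ≤ (B * vecNorm u) ^ 2 := by
  rw [mul_pow, vecNorm_sq, dotProduct, Finset.mul_sum]
  gcongr with j
  rw [mul_pow, ← sq_abs (c j), ← sq]
  gcongr
  exact hc j

lemma dotProduct_mulVec_mulVec_of_transpose_mul_self {V : Matrix (Fin a) (Fin b) ℝ}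
    (hV : Vᵀ * V = 1) (x y : Fin b → ℝ) : (V *ᵥ x) ⬝ᵥ (V *ᵥ y) = x ⬝ᵥ y := by
  rw [dotProduct_mulVec, vecMul_mulVec, hV, vecMul_one]

end Euclidean

section Projection

variable {a b : ℕ} {P : Matrix (Fin a) (Fin b) ℝ}

lemma vecNorm_one_sub_mul_transpose_mulVec_le (hP : Pᵀ * P = 1) (v : Fin a → ℝ) (c : Fin b → ℝ) :
    vecNorm ((1 - P * Pᵀ) *ᵥ v) ≤ vecNorm (v - P *ᵥ c) := by
  set r := (1 - P * Pᵀ) *ᵥ v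
  set z := Pᵀ *ᵥ v - c
  have hsplit : v - P *ᵥ c = r + P *ᵥ z := by
    simp only [r, z, sub_mulVec, one_mulVec, mulVec_sub, mulVec_mulVec]
    abel
  have horth : r ⬝ᵥ (P *ᵥ z) = 0 := by
    rw [dotProduct_mulVec, ← mulVec_transpose, mulVec_mulVec, Matrix.mul_sub, ← Matrix.mul_assoc,
      hP, Matrix.mul_one, Matrix.one_mul, sub_self, zero_mulVec, zero_dotProduct]
  rw [vecNorm_eq_sqrt_dotProduct, vecNorm_eq_sqrt_dotProduct, hsplit]
  refine Real.sqrt_le_sqrt ?_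
  rw [add_dotProduct, dotProduct_add, dotProduct_add, horth, dotProduct_comm (P *ᵥ z) r, horth]
  linarith [vecNorm_sq (P *ᵥ z), sq_nonneg (vecNorm (P *ᵥ z))]

lemma vecNorm_one_sub_mul_transpose_mulVec_sq_le_of_mem_range (hP : Pᵀ * P = 1) (v : Fin a → ℝ)
    {y : Fin a → ℝ} (hy : y ∈ LinearMap.range P.mulVecLin) :
    vecNorm ((1 - P * Pᵀ) *ᵥ v) ^ 2 ≤ v ⬝ᵥ v - (v ⬝ᵥ y) ^ 2 / (y ⬝ᵥ y) := by
  obtain ⟨c, rfl⟩ := hy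
  rw [Matrix.mulVecLin_apply]
  set y := P *ᵥ c
  set α := (v ⬝ᵥ y) / (y ⬝ᵥ y)
  have hle := vecNorm_one_sub_mul_transpose_mulVec_le hP v (α • c)
  rw [mulVec_smul] at hle
  have hα : (v - α • y) ⬝ᵥ (v - α • y) = v ⬝ᵥ v - (v ⬝ᵥ y) ^ 2 / (y ⬝ᵥ y) := by
    simp only [sub_dotProduct, dotProduct_sub, smul_dotProduct, dotProduct_smul, smul_eq_mul,
      dotProduct_comm y v, α]
    by_cases hyy : y ⬝ᵥ y = 0
    · simp [hyy]
    · field_simp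
      ring
  rw [← hα, ← vecNorm_sq]
  exact pow_le_pow_left₀ (Real.sqrt_nonneg _) hle 2

lemma vecNorm_one_sub_mul_transpose_mulVec_col_sq_le {c : ℕ} {V : Matrix (Fin a) (Fin c) ℝ}
    (hV : Vᵀ * V = 1) (hP : Pᵀ * P = 1) (l : Fin c) {w : Fin c → ℝ}
    (hw : V *ᵥ w ∈ LinearMap.range P.mulVecLin) :
    vecNorm ((1 - P * Pᵀ) *ᵥ fun r => V r l) ^ 2 ≤ 1 - w l ^ 2 / (w ⬝ᵥ w) := by
  have hcol : (fun r => V r l) = V *ᵥ Pi.single l 1 := (mulVec_single_one V l).symm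
  have h := vecNorm_one_sub_mul_transpose_mulVec_sq_le_of_mem_range hP (V *ᵥ Pi.single l 1) hw
  rw [hcol]
  simpa only [dotProduct_mulVec_mulVec_of_transpose_mul_self hV, single_dotProduct, one_mul,
    Pi.single_eq_same] using h

end Projection

section MatrixFacts

variable {R : Type*} [CommRing R] {m n r : Type*}

lemma pow_transpose_mul_self_mul_transpose_of_svd [Fintype m] [Fintype n] [Fintype r]
    [DecidableEq n] [DecidableEq r] {A : Matrix m n R} {U : Matrix m r R}
    {V : Matrix n r R} {σ : r → R} (hU : Uᵀ * U = 1) (hV : Vᵀ * V = 1)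
    (hA : A = U * diagonal σ * Vᵀ) (q : ℕ) :
    (Aᵀ * A) ^ q * Aᵀ = V * diagonal (fun j => σ j ^ (2 * q + 1)) * Uᵀ := by
  have hAAt : A * Aᵀ = U * diagonal (fun j => σ j ^ 2) * Uᵀ := by
    simp only [hA, transpose_mul, diagonal_transpose, transpose_transpose, Matrix.mul_assoc]
    simp only [← Matrix.mul_assoc (Vᵀ), hV, Matrix.one_mul, ← Matrix.mul_assoc (diagonal σ),
      diagonal_mul_diagonal, sq]
  induction q with
  | zero => simp [hA, transpose_mul, Matrix.mul_assoc]
  | succ q ih =>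
    calc (Aᵀ * A) ^ (q + 1) * Aᵀ = (Aᵀ * A) ^ q * Aᵀ * (A * Aᵀ) := by
          simp only [pow_succ, Matrix.mul_assoc]
      _ = V * diagonal (fun j => σ j ^ (2 * (q + 1) + 1)) * Uᵀ := by
          rw [ih, hAAt]
          simp only [Matrix.mul_assoc, ← Matrix.mul_assoc Uᵀ U, hU, Matrix.one_mul]
          simp only [← Matrix.mul_assoc, diagonal_mul_diagonal]
          congr 3
          ext j
          ring

lemma range_mulVecLin_mul_of_transpose_mul_self [Fintype r] [DecidableEq r] {P : Matrix n r R}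
    {Q : Matrix r r R} (hQ : Qᵀ * Q = 1) :
    LinearMap.range (P * Q).mulVecLin = LinearMap.range P.mulVecLin := by
  refine (Matrix.mulVecLin_mul P Q).symm ▸ LinearMap.range_comp_of_range_eq_top _ ?_
  refine LinearMap.range_eq_top.mpr fun y => ⟨Qᵀ *ᵥ y, ?_⟩
  rw [mulVecLin_apply, mulVec_mulVec, mul_eq_one_comm.mp hQ, one_mulVec]

lemma transpose_submatrix_mul_mulVec [Fintype m] [Fintype r] {k : Type*} (U : Matrix m n R)
    (f : k → n) (Φ : Matrix m r R) (x : r → R) :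
    ((U.submatrix id f)ᵀ * Φ) *ᵥ x = fun j => ((Uᵀ * Φ) *ᵥ x) (f j) := by
  ext j
  simp [mulVec, dotProduct, mul_apply]

end MatrixFacts

lemma mul_rowPinv_of_rank_eq {a b : ℕ} {M : Matrix (Fin a) (Fin b) ℝ} (h : M.rank = a) :
    M * rowPinv M = 1 := by
  have hrange : LinearMap.range (M * Mᵀ).mulVecLin = ⊤ := by
    refine Submodule.eq_top_of_finrank_eq ?_
    rw [← Matrix.rank, rank_self_mul_transpose, h, Module.finrank_fin_fun]
  have hunit : IsUnit (M * Mᵀ) :=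
    mulVec_surjective_iff_isUnit.mp (LinearMap.range_eq_top.mp hrange)
  rw [rowPinv, ← Matrix.mul_assoc, mul_nonsing_inv _ ((isUnit_iff_isUnit_det _).mp hunit)]

lemma sum_fin_eq_sum_castLE_add_sum_shift {M : Type*} [AddCommMonoid M] {k n : ℕ} (h : k ≤ n)
    (f : Fin n → M) :
    ∑ j, f j = ∑ j : Fin k, f (Fin.castLE h j) + ∑ j : Fin (n - k), f ⟨k + j, by omega⟩ := by
  rw [← Equiv.sum_comp (finSumFinEquiv.trans (finCongr (Nat.add_sub_of_le h))) f,
    Fintype.sum_sum_type]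
  rfl

lemma dotProduct_self_eq_sq_add_sum_of_castLE_eq_zero {k n : ℕ} (h : k ≤ n) {w : Fin n → ℝ}
    (i : Fin k) (hw : ∀ j, j ≠ i → w (Fin.castLE h j) = 0) :
    w ⬝ᵥ w = w (Fin.castLE h i) ^ 2 + ∑ j : Fin (n - k), w ⟨k + j, by omega⟩ ^ 2 := by
  rw [← vecNorm_sq, vecNorm, Real.sq_sqrt (Finset.sum_nonneg fun j _ => sq_nonneg (w j)),
    sum_fin_eq_sum_castLE_add_sum_shift h, Finset.sum_eq_single i]
  · intro j _ hj
    rw [hw j hj, sq, zero_mul]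
  · simp

lemma sqrt_one_sub_sq_div_le {a b g s T : ℝ} (ha : 0 < a) (hg : 0 ≤ g) (hs : 0 ≤ s)
    (hT : 0 ≤ T) (hTb : T ≤ (b * s) ^ 2) (hgab : g * a ≤ b) :
    Real.sqrt (1 - a ^ 2 / (a ^ 2 + T)) ≤ b / a * s / Real.sqrt (1 + g ^ 2 * s ^ 2) := by
  have hb : 0 ≤ b := (mul_nonneg hg ha.le).trans hgab
  have hrhs : b / a * s / Real.sqrt (1 + g ^ 2 * s ^ 2)
      = Real.sqrt ((b * s) ^ 2 / (a ^ 2 * (1 + g ^ 2 * s ^ 2))) := by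
    rw [Real.sqrt_div (sq_nonneg _), Real.sqrt_mul (sq_nonneg a), Real.sqrt_sq (by positivity),
      Real.sqrt_sq ha.le]
    field_simp
  have hsin : 1 - a ^ 2 / (a ^ 2 + T) = T / (a ^ 2 + T) := by
    field_simp
    ring
  rw [hrhs, hsin]
  refine Real.sqrt_le_sqrt ((div_le_div_iff₀ (by positivity) (by positivity)).mpr ?_)
  have hga : (g * a) ^ 2 ≤ b ^ 2 := pow_le_pow_left₀ (by positivity) hgab 2
  nlinarith [mul_le_mul_of_nonneg_left hga (mul_nonneg hT (sq_nonneg s)),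
    mul_le_mul_of_nonneg_right hTb (sq_nonneg a)]

lemma vecNorm_one_sub_mul_transpose_mulVec_col_le_of_power_mem_range {n d k : ℕ} (hkn : k < n)
    {V : Matrix (Fin n) (Fin n) ℝ} {P : Matrix (Fin n) (Fin d) ℝ} (hV : Vᵀ * V = 1)
    (hP : Pᵀ * P = 1) {σ : Fin n → ℝ} (hσ : Antitone σ) (hσ0 : ∀ j, 0 ≤ σ j) (i : Fin k)
    (hσi : 0 < σ (Fin.castLE hkn.le i)) (q : ℕ) {ω : Fin n → ℝ}
    (hω_top : ∀ j, ω (Fin.castLE hkn.le j) = (Pi.single i 1 : Fin k → ℝ) j) {s : ℝ}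
    (hω_bot : vecNorm (fun j : Fin (n - k) => ω ⟨k + j, by omega⟩) ≤ s)
    (hrange : V *ᵥ (fun j => σ j ^ (2 * q + 1) * ω j) ∈ LinearMap.range P.mulVecLin) :
    vecNorm ((1 - P * Pᵀ) *ᵥ fun r => V r (Fin.castLE hkn.le i)) ≤
      (σ ⟨k, hkn⟩ / σ (Fin.castLE hkn.le i)) ^ (2 * q + 1) * s /
        Real.sqrt (1 + (σ ⟨n - 1, by omega⟩ / σ ⟨0, by omega⟩) ^ (4 * q + 2) * s ^ 2) := by
  set w : Fin n → ℝ := fun j => σ j ^ (2 * q + 1) * ω j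
  set a := σ (Fin.castLE hkn.le i) ^ (2 * q + 1)
  set b := σ ⟨k, hkn⟩ ^ (2 * q + 1)
  set γ := σ ⟨n - 1, by omega⟩ / σ ⟨0, by omega⟩
  set T := ∑ j : Fin (n - k), w ⟨k + j, by omega⟩ ^ 2
  have hb : 0 ≤ b := pow_nonneg (hσ0 _) _
  have hwi : w (Fin.castLE hkn.le i) = a := by simp [w, a, hω_top]
  have hww : w ⬝ᵥ w = a ^ 2 + T := by
    rw [dotProduct_self_eq_sq_add_sum_of_castLE_eq_zero hkn.le i
      fun j hj => by simp [w, hω_top, hj], hwi]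
  have hTb : T ≤ (b * s) ^ 2 := by
    have hσb : ∀ j : Fin (n - k), |σ ⟨k + j, by omega⟩ ^ (2 * q + 1)| ≤ b := fun j => by
      rw [abs_of_nonneg (pow_nonneg (hσ0 _) _)]
      exact pow_le_pow_left₀ (hσ0 _) (hσ (by simp [Fin.le_def])) _
    calc T ≤ (b * vecNorm (fun j : Fin (n - k) => ω ⟨k + j, by omega⟩)) ^ 2 :=
          sum_sq_mul_le_sq_mul_vecNorm hσb _
      _ ≤ (b * s) ^ 2 :=
          pow_le_pow_left₀ (mul_nonneg hb (Real.sqrt_nonneg _))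
            (mul_le_mul_of_nonneg_left hω_bot hb) 2
  have hσ0pos : 0 < σ ⟨0, by omega⟩ := hσi.trans_le (hσ (by simp [Fin.le_def]))
  have hγ : 0 ≤ γ := div_nonneg (hσ0 _) hσ0pos.le
  have hγσi : γ * σ (Fin.castLE hkn.le i) ≤ σ ⟨k, hkn⟩ := by
    rw [div_mul_eq_mul_div, div_le_iff₀ hσ0pos]
    exact mul_le_mul (hσ (by simp [Fin.le_def]; omega)) (hσ (by simp [Fin.le_def])) hσi.le (hσ0 _)
  calc vecNorm ((1 - P * Pᵀ) *ᵥ fun r => V r (Fin.castLE hkn.le i))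
      ≤ Real.sqrt (1 - w (Fin.castLE hkn.le i) ^ 2 / (w ⬝ᵥ w)) :=
        Real.le_sqrt_of_sq_le (vecNorm_one_sub_mul_transpose_mulVec_col_sq_le hV hP _ hrange)
    _ = Real.sqrt (1 - a ^ 2 / (a ^ 2 + T)) := by rw [hwi, hww]
    _ ≤ b / a * s / Real.sqrt (1 + (γ ^ (2 * q + 1)) ^ 2 * s ^ 2) :=
        sqrt_one_sub_sq_div_le (pow_pos hσi _) (pow_nonneg hγ _) ((Real.sqrt_nonneg _).trans hω_bot)
          (Finset.sum_nonneg fun _ _ => sq_nonneg _) hTb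
          (by rw [← mul_pow]; exact pow_le_pow_left₀ (mul_nonneg hγ hσi.le) hγσi _)
    _ = _ := by simp only [a, b, ← div_pow, ← pow_mul]; ring_nf

theorem ruqlp_sin_angle_P_vi_bound
    (m n k q : ℕ) (hkn : k < n)
    (d : ℕ)
    (A U : Matrix (Fin m) (Fin n) ℝ) (V : Matrix (Fin n) (Fin n) ℝ) (σ : Fin n → ℝ)
    (hU : Uᵀ * U = 1) (hV : Vᵀ * V = 1)
    (hσ : Antitone σ) (hσ0 : ∀ i, 0 ≤ σ i)
    (hA : A = U * Matrix.diagonal σ * Vᵀ)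
    (hgap : σ ⟨k, hkn⟩ < σ ⟨k - 1, by omega⟩)
    (Φ : Matrix (Fin m) (Fin d) ℝ)
    (Uk : Matrix (Fin m) (Fin k) ℝ) (hUk : Uk = U.submatrix id (Fin.castLE hkn.le))
    (Uperp : Matrix (Fin m) (Fin (n - k)) ℝ)
    (hUperp : Uperp = U.submatrix id fun i => ⟨k + i.1, by have := i.2; omega⟩)
    (Φ1 : Matrix (Fin k) (Fin d) ℝ) (hΦ1 : Φ1 = Ukᵀ * Φ)
    (Φ2 : Matrix (Fin (n - k)) (Fin d) ℝ) (hΦ2 : Φ2 = Uperpᵀ * Φ)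
    (hrank : Φ1.rank = k)
    (Pbar : Matrix (Fin n) (Fin d) ℝ) (hPbar : Pbarᵀ * Pbar = 1)
    (hPrange : LinearMap.range (Matrix.mulVecLin Pbar)
      = LinearMap.range (Matrix.mulVecLin ((Aᵀ * A) ^ q * Aᵀ * Φ)))
    (Ptil : Matrix (Fin d) (Fin d) ℝ)
    (hPtil : Ptilᵀ * Ptil = 1)
    (P : Matrix (Fin n) (Fin d) ℝ) (hP : P = Pbar * Ptil)
    :
    ∀ i : Fin k,
      vecNorm ((1 - P * Pᵀ).mulVec fun r => V r (Fin.castLE hkn.le i)) ≤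
        (σ ⟨k, hkn⟩ / σ (Fin.castLE hkn.le i)) ^ (2 * q + 1) * specNorm (Φ2 * rowPinv Φ1) /
          Real.sqrt (1 + (σ ⟨n - 1, by omega⟩ / σ ⟨0, by omega⟩) ^ (4 * q + 2) * specNorm (Φ2 * rowPinv Φ1) ^ 2) := by
  intro i
  set e : Fin k → ℝ := Pi.single i 1
  set x := rowPinv Φ1 *ᵥ e
  have hω_top : ∀ j, ((Uᵀ * Φ) *ᵥ x) (Fin.castLE hkn.le j) = e j := fun j => by
    rw [← congrFun (transpose_submatrix_mul_mulVec U _ Φ x) j, ← hUk, ← hΦ1, mulVec_mulVec,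
      mul_rowPinv_of_rank_eq hrank, one_mulVec]
  have hω_bot : vecNorm (fun j : Fin (n - k) => ((Uᵀ * Φ) *ᵥ x) ⟨k + j, by omega⟩)
      ≤ specNorm (Φ2 * rowPinv Φ1) := by
    rw [← transpose_submatrix_mul_mulVec, ← hUperp, ← hΦ2, mulVec_mulVec]
    simpa [e, vecNorm_single_one] using vecNorm_mulVec_le (Φ2 * rowPinv Φ1) e
  have hrange : V *ᵥ (fun j => σ j ^ (2 * q + 1) * ((Uᵀ * Φ) *ᵥ x) j)
      ∈ LinearMap.range P.mulVecLin := by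
    rw [hP, range_mulVecLin_mul_of_transpose_mul_self hPtil, hPrange,
      pow_transpose_mul_self_mul_transpose_of_svd hU hV hA q]
    refine ⟨x, ?_⟩
    simp only [mulVecLin_apply, Matrix.mul_assoc, ← mulVec_mulVec]
    exact congrArg _ (funext fun j => mulVec_diagonal _ _ j)
  have hσi : 0 < σ (Fin.castLE hkn.le i) :=
    (hσ0 _).trans_lt hgap |>.trans_le (hσ (by simp [Fin.le_def]; omega))
  have hPP : Pᵀ * P = 1 := by
    rw [hP, transpose_mul, Matrix.mul_assoc, ← Matrix.mul_assoc Pbarᵀ, hPbar, Matrix.one_mul, hPtil]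
  exact vecNorm_one_sub_mul_transpose_mulVec_col_le_of_power_mem_range hkn hV hPP hσ hσ0 i hσi q
    hω_top hω_bot hrange
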